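/- arXiv:1910.04272 — 2 statements merged into one kernel-verified Lean document; each statement's English description precedes it below -/
import Mathlib

section
/- Let ρ and ρ' be isomorphic irreducible complex representations of a finite group G on spaces V and V'. If the cocycles c and c' are defined from choices of intertwiners T_q on V and T'_q on V' for the stabilizer Q_{[ρ]} as in Clifford theory, then c and c' differ by a coboundary: there is a function λ: Q_{[ρ]} → ℂ* with c'(q,q') = c(q,q') λ(q)λ(q')λ(qq')⁻¹. In particular the class of c in H²(Q_{[ρ]}, ℂ*) is independent of all choices. -/
/-- Isomorphism of representations. -/
def RepIso {G : Type} [Group G] {V W : Type} [AddCommGroup V] [Module ℂ V]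
    [AddCommGroup W] [Module ℂ W]
    (ρ : Representation ℂ G V) (ρ' : Representation ℂ G W) : Prop :=
  ∃ T : V ≃ₗ[ℂ] W, ∀ (g : G) (v : V), T (ρ g v) = ρ' g (T v)

/-- Irreducibility of a representation. -/
def IsIrred {G : Type} [Group G] {V : Type} [AddCommGroup V] [Module ℂ V]
    (ρ : Representation ℂ G V) : Prop :=
  Nontrivial V ∧ ∀ p : Submodule ℂ V, (∀ g : G, ∀ v ∈ p, ρ g v ∈ p) → p = ⊥ ∨ p = ⊤

/-- Conjugation `g ↦ h⁻¹ g h` on a normal subgroup. -/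
def conjHom {H : Type} [Group H] (N : Subgroup H) [hN : N.Normal] (h : H) : N →* N where
  toFun g := ⟨h⁻¹ * (g : H) * h, by simpa using hN.conj_mem (g : H) g.2 h⁻¹⟩
  map_one' := by ext; simp
  map_mul' a b := by ext; simp [Subgroup.coe_mul]; group

/-- The representation `g ↦ ρ(h⁻¹ g h)`. -/
def conjRep {H : Type} [Group H] (N : Subgroup H) [N.Normal] (h : H)
    {V : Type} [AddCommGroup V] [Module ℂ V] (ρ : Representation ℂ N V) :
    Representation ℂ N V :=
  ρ.comp (conjHom N h)

/-- Restriction of a representation to an invariant submodule. -/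
def subRep {G W : Type} [Group G] [AddCommGroup W] [Module ℂ W]
    (σ : Representation ℂ G W) (p : Submodule ℂ W)
    (hp : ∀ g : G, ∀ x ∈ p, σ g x ∈ p) : Representation ℂ G p where
  toFun g := LinearMap.restrict (σ g) (hp g)
  map_one' := by ext x; simp [LinearMap.restrict_apply]
  map_mul' g g' := by ext x; simp [LinearMap.restrict_apply]


lemma conjHom_inv_conjHom {H : Type} [Group H] (N : Subgroup H) [N.Normal] (h : H) (g : N) :
    conjHom N h⁻¹ (conjHom N h g) = g := by
  ext; simp [conjHom]; group

lemma schur_scalar {G : Type} [Group G] {V : Type} [AddCommGroup V] [Module ℂ V]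
    [FiniteDimensional ℂ V] (ρ : Representation ℂ G V) (hρ : IsIrred ρ)
    (f : V →ₗ[ℂ] V) (hf : ∀ g v, f (ρ g v) = ρ g (f v)) :
    ∃ μ : ℂ, ∀ v, f v = μ • v := by
  haveI : Nontrivial V := hρ.1
  obtain ⟨μ, hμ⟩ := Module.End.exists_eigenvalue f
  refine ⟨μ, fun v => ?_⟩
  have hinv : ∀ g : G, ∀ v ∈ Module.End.eigenspace f μ, ρ g v ∈ Module.End.eigenspace f μ := by
    intro g v hv
    rw [Module.End.mem_eigenspace_iff] at hv ⊢
    rw [hf, hv, map_smul]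
  rcases hρ.2 _ hinv with h | h
  · exact absurd h hμ
  · have : v ∈ Module.End.eigenspace f μ := h ▸ Submodule.mem_top
    exact Module.End.mem_eigenspace_iff.mp this

/-- if `ρ ≅ ρ'` are isomorphic irreducible representations and `c`, `c'`
are Clifford cocycles on the stabilizer `Q' = Q_{[ρ]}` defined from choices of
intertwiners `T_q` on `V` and `T'_q` on `V'` (with respect to the same lifts `s q`),
then `c` and `c'` differ by a coboundary: there is `λ : Q' → ℂ*` with
`c'(q,q') = c(q,q') λ(q) λ(q') λ(qq')⁻¹`; so the class of `c` in `H²(Q_{[ρ]}, ℂ*)` is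
independent of all choices. -/
theorem clifford_cocycle_class_well_defined {H Q : Type} [Group H] [Group Q] [Finite H]
    (π : H →* Q) (hsurj : Function.Surjective π)
    {V V' : Type} [AddCommGroup V] [Module ℂ V] [FiniteDimensional ℂ V]
    [AddCommGroup V'] [Module ℂ V'] [FiniteDimensional ℂ V']
    (ρ : Representation ℂ π.ker V) (ρ' : Representation ℂ π.ker V')
    (hρ : IsIrred ρ) (hρ' : IsIrred ρ') (hiso : RepIso ρ ρ')
    (Q' : Subgroup Q) (s : Q → H) (hs : ∀ q ∈ Q', π (s q) = q)
    (T : Q → (V ≃ₗ[ℂ] V)) (T' : Q → (V' ≃ₗ[ℂ] V'))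
    (hT : ∀ q ∈ Q', ∀ (g : π.ker) (v : V),
      T q (ρ g v) = ρ (conjHom π.ker (s q)⁻¹ g) (T q v))
    (hT' : ∀ q ∈ Q', ∀ (g : π.ker) (v : V'),
      T' q (ρ' g v) = ρ' (conjHom π.ker (s q)⁻¹ g) (T' q v))
    (c c' : Q → Q → ℂˣ)
    (hc : ∀ q ∈ Q', ∀ q' ∈ Q', ∀ v : V,
      T q (T q' v) = (c q q' : ℂ) • T (q * q') v)
    (hc' : ∀ q ∈ Q', ∀ q' ∈ Q', ∀ v : V',
      T' q (T' q' v) = (c' q q' : ℂ) • T' (q * q') v) :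
    ∃ lam : Q → ℂˣ, ∀ q ∈ Q', ∀ q' ∈ Q',
      c' q q' = c q q' * lam q * lam q' * (lam (q * q'))⁻¹ := by
  obtain ⟨S, hS⟩ := hiso
  haveI : Nontrivial V' := hρ'.1
  have hSsymm : ∀ (g : π.ker) (w : V'), S.symm (ρ' g w) = ρ g (S.symm w) := by
    intro g w
    apply S.injective
    rw [hS, S.apply_symm_apply, S.apply_symm_apply]
  have key : ∀ q : Q, ∃ μ : ℂˣ, q ∈ Q' → ∀ w : V',
      T' q w = ((μ : ℂ))⁻¹ • S (T q (S.symm w)) := by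
    intro q
    by_cases hq : q ∈ Q'
    · set f : V' →ₗ[ℂ] V' :=
        S.toLinearMap ∘ₗ (T q).toLinearMap ∘ₗ S.symm.toLinearMap ∘ₗ (T' q).symm.toLinearMap
        with hfdef
      have hcomm : ∀ (g : π.ker) (v : V'), f (ρ' g v) = ρ' g (f v) := by
        intro g v
        set g₀ : π.ker := conjHom π.ker (s q) g with hg₀
        have hgg : conjHom π.ker (s q)⁻¹ g₀ = g := conjHom_inv_conjHom π.ker (s q) g
        have h1 : (T' q).symm (ρ' g v) = ρ' g₀ ((T' q).symm v) := by
          apply (T' q).injective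
          rw [(T' q).apply_symm_apply, hT' q hq g₀, hgg, (T' q).apply_symm_apply]
        simp only [hfdef, LinearMap.comp_apply, LinearEquiv.coe_coe]
        rw [h1, hSsymm, hT q hq g₀, hgg, hS]
      obtain ⟨μ₀, hμ₀⟩ := schur_scalar ρ' hρ' f hcomm
      have hfv : ∀ v, S (T q (S.symm ((T' q).symm v))) = μ₀ • v := fun v => hμ₀ v
      have hne : μ₀ ≠ 0 := by
        obtain ⟨v, hv⟩ := exists_ne (0 : V')
        intro h0
        apply hv
        have h := hfv v
        rw [h0, zero_smul] at h
        have h1 : T q (S.symm ((T' q).symm v)) = 0 := S.map_eq_zero_iff.mp h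
        have h2 : S.symm ((T' q).symm v) = 0 := (T q).map_eq_zero_iff.mp h1
        have h3 : (T' q).symm v = 0 := S.symm.map_eq_zero_iff.mp h2
        exact (T' q).symm.map_eq_zero_iff.mp h3
      refine ⟨Units.mk0 μ₀ hne, fun _ w => ?_⟩
      have h := hfv (T' q w)
      rw [(T' q).symm_apply_apply] at h
      rw [Units.val_mk0, h, smul_smul, inv_mul_cancel₀ hne, one_smul]
    · exact ⟨1, fun h => absurd h hq⟩
  choose μ hμ using key
  refine ⟨fun q => (μ q)⁻¹, fun q hq q' hq' => ?_⟩
  have hqq' : q * q' ∈ Q' := mul_mem hq hq'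
  obtain ⟨v, hv⟩ := exists_ne (0 : V')
  have hw : T' (q * q') v ≠ 0 := fun h => hv ((T' (q * q')).map_eq_zero_iff.mp h)
  have lhs : T' q (T' q' v) = (c' q q' : ℂ) • T' (q * q') v := hc' q hq q' hq' v
  have h4 : S (T (q * q') (S.symm v)) = (μ (q * q') : ℂ) • T' (q * q') v := by
    rw [hμ (q * q') hqq' v, smul_smul, mul_inv_cancel₀ (μ (q * q')).ne_zero, one_smul]
  have rhs : T' q (T' q' v)
      = ((c q q' : ℂ) * ((μ q : ℂ))⁻¹ * ((μ q' : ℂ))⁻¹ * (μ (q * q') : ℂ)) • T' (q * q') v := by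
    rw [hμ q' hq' v, map_smul, hμ q hq, S.symm_apply_apply, hc q hq q' hq',
      map_smul, h4, smul_smul, smul_smul, smul_smul]
    ring_nf
  have heq : (c' q q' : ℂ)
      = (c q q' : ℂ) * ((μ q : ℂ))⁻¹ * ((μ q' : ℂ))⁻¹ * (μ (q * q') : ℂ) :=
    smul_left_injective ℂ hw (lhs.symm.trans rhs)
  apply Units.ext
  push_cast [Units.val_inv_eq_inv_val, inv_inv]
  exact heq
end

section
/- Let G be normal in a finite group H, ρ an irreducible G-representation on V with [ρ] fixed by all of Q = H/G, and suppose the associated Clifford cocycle class in H²(Q, ℂ*) is trivial. Then ρ extends to a representation of H on V, i.e., there exists a representation ρ̃: H → GL(V) with ρ̃|_G = ρ. -/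
/-- let `G = ker π` be normal in a finite group `H` with quotient `Q`, let
`ρ` be an irreducible `G`-representation on `V` whose class is fixed by all of `Q`, and
suppose the associated Clifford cocycle `c ∈ Z²(Q, ℂ*)` (defined via intertwiners
`P h` with `P h ρ(g) (P h)⁻¹ = ρ(h g h⁻¹)` extending `ρ`) is a coboundary.  Then `ρ`
extends to a representation of `H` on `V`. -/
theorem irreducible_extends_of_trivial_cocycle {H Q : Type} [Group H] [Group Q]
    [Finite H] (π : H →* Q) (hsurj : Function.Surjective π)
    {V : Type} [AddCommGroup V] [Module ℂ V] [FiniteDimensional ℂ V]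
    (ρ : Representation ℂ π.ker V) (hρ : IsIrred ρ)
    (hfix : ∀ h : H, RepIso (conjRep π.ker h ρ) ρ)
    (P : H → (V ≃ₗ[ℂ] V))
    (hPG : ∀ (g : π.ker) (v : V), P (g : H) v = ρ g v)
    (hPconj : ∀ (h : H) (g : π.ker) (v : V),
      P h (ρ g v) = ρ (conjHom π.ker h⁻¹ g) (P h v))
    (c : Q → Q → ℂˣ)
    (hc : ∀ (h h' : H) (v : V), P h (P h' v) = (c (π h) (π h') : ℂ) • P (h * h') v)
    (lam : Q → ℂˣ)
    (hcob : ∀ q q' : Q, c q q' = lam q * lam q' * (lam (q * q'))⁻¹) :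
    ∃ ρe : Representation ℂ H V, ∀ (g : π.ker) (v : V), ρe (g : H) v = ρ g v := by
  have hP1 : ∀ v : V, P 1 v = v := by
    intro v
    have := hPG (1 : π.ker) v
    simpa using this
  -- c 1 1 = 1
  have hnt : Nontrivial V := hρ.1
  obtain ⟨v₀, hv₀⟩ := exists_ne (0 : V)
  have hc11 : (c 1 1 : ℂ) = 1 := by
    have := hc 1 1 v₀
    rw [hP1, hP1, map_one, one_mul, hP1] at this
    by_contra hne
    have hz : ((c 1 1 : ℂ) - 1) • v₀ = 0 := by
      rw [sub_smul, one_smul, ← this, sub_self]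
    rcases smul_eq_zero.mp hz with h1 | h2
    · exact hne (by linear_combination h1)
    · exact hv₀ h2
  have hlam1 : (lam 1 : ℂ) = 1 := by
    have h := hcob 1 1
    have : c 1 1 = lam 1 := by rw [h, one_mul]; group
    rw [this] at hc11
    exact hc11
  refine ⟨{ toFun := fun h => ((lam (π h) : ℂ)⁻¹) • (P h : V →ₗ[ℂ] V),
            map_one' := ?_, map_mul' := ?_ }, ?_⟩
  · ext v
    simp [hlam1, hP1 v]
  · intro h h'
    ext v
    have key : ((lam (π (h * h')) : ℂ))⁻¹ =
        ((lam (π h) : ℂ))⁻¹ * ((lam (π h') : ℂ))⁻¹ * (c (π h) (π h') : ℂ) := by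
      have h1 := hcob (π h) (π h')
      have : (c (π h) (π h') : ℂ) = (lam (π h) : ℂ) * (lam (π h') : ℂ) *
          ((lam (π h * π h') : ℂ))⁻¹ := by
        rw [h1]; push_cast; ring
      rw [this, map_mul]
      field_simp
    simp only [LinearMap.smul_apply, Module.End.mul_apply, LinearEquiv.coe_coe,
      LinearMap.map_smul, smul_smul]
    rw [hc h h' v, key, smul_smul]
  · intro g v
    have hπg : π (g : H) = 1 := g.2
    simp [hπg, hlam1, hPG g v]
end
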